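/- For every integer p ≥ 1 and every real number x ≠ 0, the sum over the p-th roots contributions satisfies ∑_{m=0}^{p-1} 1/(sin²(πm/p) + sinh²(x)) = p·sinh(2px)/(sinh(2x)·sinh²(px)), and this common value also equals 2p·cosh(px)/(sinh(2x)·sinh(px)). -/

import Mathlib

/-!
With `z = exp y` and `ζ = exp (2πi/p)` one has
`2z (cosh y - cos (2πm/p)) = (z - ζ^m)(z - ζ^{-m})`, and `∏ₘ (z - ζ^m) = z^p - 1`, so
`∏ₘ (cosh y - cos (2πm/p)) = 2^{1-p} (cosh (py) - 1)`. Taking the logarithmic derivative in `y`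
gives `∑ₘ 1 / (cosh y - cos (2πm/p)) = p sinh (py) / (sinh y (cosh (py) - 1))`, and the theorem is
the case `y = 2x`, because `sin² (πm/p) + sinh² x = (cosh 2x - cos (2πm/p)) / 2`.
-/

open Real

open Polynomial in
theorem IsPrimitiveRoot.prod_range_sub_pow {R : Type*} [CommRing R] [IsDomain R] {ζ : R} {n : ℕ}
    (hζ : IsPrimitiveRoot ζ n) (hn : 0 < n) (w : R) :
    ∏ k ∈ Finset.range n, (w - ζ ^ k) = w ^ n - 1 := by
  simpa [eval_prod] using (congrArg (eval w) (X_pow_sub_C_eq_prod hζ hn (one_pow n))).symm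

theorem Complex.two_pow_mul_prod_cosh_sub_cos {p : ℕ} (hp : 0 < p) (y : ℂ) :
    2 ^ p * ∏ m ∈ Finset.range p, (Complex.cosh y - Complex.cos (2 * π * m / p)) =
      2 * (Complex.cosh (p * y) - 1) := by
  set ζ := Complex.exp (2 * π * Complex.I / p)
  have hζ : IsPrimitiveRoot ζ p := Complex.isPrimitiveRoot_exp p hp.ne'
  set z := Complex.exp y
  have hz : z ≠ 0 := Complex.exp_ne_zero y
  have factor (m : ℕ) :
      2 * z * (Complex.cosh y - Complex.cos (2 * π * m / p)) = (z - ζ ^ m) * (z - ζ⁻¹ ^ m) := by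
    have hζm : ζ ^ m = Complex.exp (2 * π * m / p * Complex.I) := by
      rw [← Complex.exp_nat_mul]
      ring_nf
    have hζm0 : ζ ^ m ≠ 0 := pow_ne_zero _ (Complex.exp_ne_zero _)
    rw [Complex.cosh, Complex.cos, neg_mul]
    simp only [Complex.exp_neg, ← hζm, inv_pow]
    field_simp
    ring
  have hcosh : z ^ p * (2 * (Complex.cosh (p * y) - 1)) = (z ^ p - 1) ^ 2 := by
    rw [Complex.cosh, ← Complex.exp_nat_mul, Complex.exp_neg, Complex.exp_nat_mul]
    field_simp
    ring
  apply mul_left_cancel₀ (pow_ne_zero p hz)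
  calc z ^ p * (2 ^ p * ∏ m ∈ Finset.range p, (Complex.cosh y - Complex.cos (2 * π * m / p)))
      = ∏ m ∈ Finset.range p, (2 * z * (Complex.cosh y - Complex.cos (2 * π * m / p))) := by
        rw [Finset.prod_mul_distrib, Finset.prod_const, Finset.card_range, mul_pow]
        ring
    _ = (z ^ p - 1) ^ 2 := by
        simp_rw [factor, Finset.prod_mul_distrib, hζ.prod_range_sub_pow hp,
          hζ.inv.prod_range_sub_pow hp, sq]
    _ = z ^ p * (2 * (Complex.cosh (p * y) - 1)) := hcosh.symm

theorem Real.two_pow_mul_prod_cosh_sub_cos {p : ℕ} (hp : 0 < p) (y : ℝ) :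
    2 ^ p * ∏ m ∈ Finset.range p, (cosh y - cos (2 * π * m / p)) = 2 * (cosh (p * y) - 1) := by
  exact_mod_cast Complex.two_pow_mul_prod_cosh_sub_cos hp y

theorem Real.sum_inv_cosh_sub_cos {p : ℕ} (hp : 0 < p) {y : ℝ} (hy : y ≠ 0) :
    ∑ m ∈ Finset.range p, 1 / (cosh y - cos (2 * π * m / p)) =
      p * sinh (p * y) / (sinh y * (cosh (p * y) - 1)) := by
  have hfactor (m : ℕ) : cosh y - cos (2 * π * m / p) ≠ 0 := by
    linarith [one_lt_cosh.2 hy, cos_le_one (2 * π * m / p)]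
  have hlog := congrArg (logDeriv · y) (funext (two_pow_mul_prod_cosh_sub_cos hp))
  rw [logDeriv_const_mul _ _ (by positivity),
    logDeriv_prod (f := fun (m : ℕ) x => cosh x - cos (2 * π * m / p))
      (fun m _ => hfactor m) (fun m _ => by fun_prop),
    logDeriv_const_mul _ _ two_ne_zero] at hlog
  have hderiv : deriv (fun x => cosh (p * x)) y = p * sinh (p * y) := by
    simp [mul_comm]
  simp only [logDeriv_apply, deriv_sub_const, Real.deriv_cosh, hderiv] at hlog
  simp_rw [← mul_one_div (sinh y)] at hlog
  rw [← Finset.mul_sum] at hlog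
  rw [mul_comm (sinh y), ← div_div, ← hlog, mul_div_cancel_left₀ _ (sinh_ne_zero.2 hy)]

theorem Real.sin_sq_add_sinh_sq (a x : ℝ) :
    sin a ^ 2 + sinh x ^ 2 = (cosh (2 * x) - cos (2 * a)) / 2 := by
  rw [cosh_two_mul, cosh_sq, cos_two_mul', cos_sq']
  ring

theorem elliptic_image_sum (p : ℕ) (hp : 1 ≤ p) (x : ℝ) (hx : x ≠ 0) :
    (∑ m ∈ Finset.range p,
        1 / (Real.sin (Real.pi * m / p) ^ 2 + Real.sinh x ^ 2)) =
      p * Real.sinh (2 * p * x) / (Real.sinh (2 * x) * Real.sinh (p * x) ^ 2) ∧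
    (∑ m ∈ Finset.range p,
        1 / (Real.sin (Real.pi * m / p) ^ 2 + Real.sinh x ^ 2)) =
      2 * p * Real.cosh (p * x) / (Real.sinh (2 * x) * Real.sinh (p * x)) := by
  have hsum : ∑ m ∈ Finset.range p, 1 / (sin (π * m / p) ^ 2 + sinh x ^ 2) =
      2 * (p * sinh (p * (2 * x)) / (sinh (2 * x) * (cosh (p * (2 * x)) - 1))) := by
    rw [← sum_inv_cosh_sub_cos hp (mul_ne_zero two_ne_zero hx), Finset.mul_sum]
    refine Finset.sum_congr rfl fun m _ => ?_
    rw [sin_sq_add_sinh_sq, one_div_div, mul_one_div]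
    ring_nf
  have hsinh : sinh (p * x) ≠ 0 := sinh_ne_zero.2 (mul_ne_zero (by positivity) hx)
  have hcosh : cosh (p * (2 * x)) - 1 = 2 * sinh (p * x) ^ 2 := by
    rw [show p * (2 * x) = 2 * (p * x) by ring, cosh_two_mul, cosh_sq]
    ring
  rw [hsum, hcosh, show p * (2 * x) = 2 * p * x by ring]
  constructor
  · field_simp
  · rw [show 2 * p * x = 2 * (p * x) by ring, sinh_two_mul]
    field_simp
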